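/- For all x ∈ (0,1), Ψ(x) = x^(2x²+2)·(1−x)^(−(1−x)²)·(1+x)^(−(1+x)²) satisfies Ψ(x) < 0.087. -/
import Mathlib

open Real Set

private lemma expUB8 {x : ℝ} (h0 : 0 ≤ x) (h1 : x ≤ 1) :
    Real.exp x ≤ 1 + x + x^2/2 + x^3/6 + x^4/24 + x^5/120 + x^6/720 + x^7/5040 + x^8*9/322560 := by
  have h := Real.exp_bound' h0 h1 (n := 8) (by norm_num)
  simp only [Finset.sum_range_succ, Finset.sum_range_zero, Nat.factorial] at h
  norm_num at h
  linarith

private lemma expLB12 {x : ℝ} (h0 : 0 ≤ x) :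
    1 + x + x^2/2 + x^3/6 + x^4/24 + x^5/120 + x^6/720 + x^7/5040 + x^8/40320 + x^9/362880
      + x^10/3628800 + x^11/39916800 ≤ Real.exp x := by
  have h := Real.sum_le_exp_of_nonneg h0 12
  simp only [Finset.sum_range_succ, Finset.sum_range_zero, Nat.factorial] at h
  norm_num at h
  linarith

private lemma lA0 : Real.log (13/25) ≤ -(65391/100000) := by
  rw [Real.log_le_iff_le_exp (by norm_num)]
  have hb : Real.exp (65391/100000) ≤ (25/13) :=
    (expUB8 (by norm_num) (by norm_num)).trans (by norm_num)
  have hp := Real.exp_pos ((65391/100000) : ℝ)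
  rw [Real.exp_neg]
  have h1 := inv_mul_cancel₀ hp.ne'
  nlinarith [mul_nonneg (inv_pos.mpr hp).le (sub_nonneg.mpr hb), inv_pos.mpr hp]

private lemma lB0 : -(36699/50000) ≤ Real.log (12/25) := by
  rw [Real.le_log_iff_exp_le (by norm_num)]
  have hb : ((25/12) : ℝ) ≤ Real.exp (36699/50000) :=
    le_trans (by norm_num) (expLB12 (by norm_num))
  have hp := Real.exp_pos ((36699/50000) : ℝ)
  rw [Real.exp_neg]
  have h1 := inv_mul_cancel₀ hp.ne'
  nlinarith [mul_nonneg (inv_pos.mpr hp).le (sub_nonneg.mpr hb), inv_pos.mpr hp]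

private lemma lC0 : ((4187/10000) : ℝ) ≤ Real.log (38/25) := by
  rw [Real.le_log_iff_exp_le (by norm_num)]
  exact (expUB8 (by norm_num) (by norm_num)).trans (by norm_num)

private lemma region0 {x : ℝ} (h0 : 0 < x) (h1 : x < 1)
    (hlo : 0 ≤ x) (hhi : x ≤ (11/20)) :
    Real.log x * (2 * x ^ 2 + 2) + Real.log (1 - x) * (-(1 - x) ^ 2)
      + Real.log (1 + x) * (-(1 + x) ^ 2) ≤ -(2443/1000) := by
  have hs : (0:ℝ) < 1 - x := by linarith
  have hw : (0:ℝ) < 1 + x := by linarith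
  have t1 : Real.log x ≤ -(65391/100000) + ((25/13) * x - 1) := by
    have h := Real.log_le_sub_one_of_pos (div_pos h0 (show (0:ℝ) < (13/25) by norm_num))
    rw [Real.log_div h0.ne' (by norm_num)] at h
    have hx : x / (13/25) = (25/13) * x := by ring
    rw [hx] at h
    linarith [lA0]
  have t2 : -(36699/50000) * (1 - x) + ((13/25) - x) ≤ (1 - x) * Real.log (1 - x) := by
    have h := Real.log_le_sub_one_of_pos (div_pos (show (0:ℝ) < (12/25) by norm_num) hs)
    rw [Real.log_div (by norm_num) hs.ne'] at h
    have h3 := mul_le_mul_of_nonneg_left h hs.le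
    rw [mul_sub, mul_sub, mul_div_cancel₀ _ hs.ne'] at h3
    nlinarith [mul_le_mul_of_nonneg_left lB0 hs.le]
  have t3 : ((4187/10000) : ℝ) * (1 + x) + (x - (13/25)) ≤ (1 + x) * Real.log (1 + x) := by
    have h := Real.log_le_sub_one_of_pos (div_pos (show (0:ℝ) < (38/25) by norm_num) hw)
    rw [Real.log_div (by norm_num) hw.ne'] at h
    have h3 := mul_le_mul_of_nonneg_left h hw.le
    rw [mul_sub, mul_sub, mul_div_cancel₀ _ hw.ne'] at h3
    nlinarith [mul_le_mul_of_nonneg_left lC0 hw.le]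
  nlinarith [mul_le_mul_of_nonneg_right t1 (show (0:ℝ) ≤ 2 * x ^ 2 + 2 by positivity),
    mul_le_mul_of_nonneg_left t2 hs.le, mul_le_mul_of_nonneg_left t3 hw.le,
    mul_nonneg (sub_nonneg.mpr hlo) (sub_nonneg.mpr hhi),
    mul_nonneg (mul_nonneg (sub_nonneg.mpr hlo) (sub_nonneg.mpr hhi)) (sub_nonneg.mpr hhi),
    mul_nonneg (mul_nonneg (sub_nonneg.mpr hlo) (sub_nonneg.mpr hlo)) (sub_nonneg.mpr hhi),
    sq_nonneg (x - (13/25))]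

private lemma lA1 : Real.log (29/50) ≤ -(54471/100000) := by
  rw [Real.log_le_iff_le_exp (by norm_num)]
  have hb : Real.exp (54471/100000) ≤ (50/29) :=
    (expUB8 (by norm_num) (by norm_num)).trans (by norm_num)
  have hp := Real.exp_pos ((54471/100000) : ℝ)
  rw [Real.exp_neg]
  have h1 := inv_mul_cancel₀ hp.ne'
  nlinarith [mul_nonneg (inv_pos.mpr hp).le (sub_nonneg.mpr hb), inv_pos.mpr hp]

private lemma lB1 : -(2711/3125) ≤ Real.log (21/50) := by
  rw [Real.le_log_iff_exp_le (by norm_num)]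
  have hb : ((50/21) : ℝ) ≤ Real.exp (2711/3125) :=
    le_trans (by norm_num) (expLB12 (by norm_num))
  have hp := Real.exp_pos ((2711/3125) : ℝ)
  rw [Real.exp_neg]
  have h1 := inv_mul_cancel₀ hp.ne'
  nlinarith [mul_nonneg (inv_pos.mpr hp).le (sub_nonneg.mpr hb), inv_pos.mpr hp]

private lemma lC1 : ((45741/100000) : ℝ) ≤ Real.log (79/50) := by
  rw [Real.le_log_iff_exp_le (by norm_num)]
  exact (expUB8 (by norm_num) (by norm_num)).trans (by norm_num)

private lemma region1 {x : ℝ} (h0 : 0 < x) (h1 : x < 1)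
    (hlo : (11/20) ≤ x) (hhi : x ≤ (61/100)) :
    Real.log x * (2 * x ^ 2 + 2) + Real.log (1 - x) * (-(1 - x) ^ 2)
      + Real.log (1 + x) * (-(1 + x) ^ 2) ≤ -(2443/1000) := by
  have hs : (0:ℝ) < 1 - x := by linarith
  have hw : (0:ℝ) < 1 + x := by linarith
  have t1 : Real.log x ≤ -(54471/100000) + ((50/29) * x - 1) := by
    have h := Real.log_le_sub_one_of_pos (div_pos h0 (show (0:ℝ) < (29/50) by norm_num))
    rw [Real.log_div h0.ne' (by norm_num)] at h
    have hx : x / (29/50) = (50/29) * x := by ring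
    rw [hx] at h
    linarith [lA1]
  have t2 : -(2711/3125) * (1 - x) + ((29/50) - x) ≤ (1 - x) * Real.log (1 - x) := by
    have h := Real.log_le_sub_one_of_pos (div_pos (show (0:ℝ) < (21/50) by norm_num) hs)
    rw [Real.log_div (by norm_num) hs.ne'] at h
    have h3 := mul_le_mul_of_nonneg_left h hs.le
    rw [mul_sub, mul_sub, mul_div_cancel₀ _ hs.ne'] at h3
    nlinarith [mul_le_mul_of_nonneg_left lB1 hs.le]
  have t3 : ((45741/100000) : ℝ) * (1 + x) + (x - (29/50)) ≤ (1 + x) * Real.log (1 + x) := by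
    have h := Real.log_le_sub_one_of_pos (div_pos (show (0:ℝ) < (79/50) by norm_num) hw)
    rw [Real.log_div (by norm_num) hw.ne'] at h
    have h3 := mul_le_mul_of_nonneg_left h hw.le
    rw [mul_sub, mul_sub, mul_div_cancel₀ _ hw.ne'] at h3
    nlinarith [mul_le_mul_of_nonneg_left lC1 hw.le]
  nlinarith [mul_le_mul_of_nonneg_right t1 (show (0:ℝ) ≤ 2 * x ^ 2 + 2 by positivity),
    mul_le_mul_of_nonneg_left t2 hs.le, mul_le_mul_of_nonneg_left t3 hw.le,
    mul_nonneg (sub_nonneg.mpr hlo) (sub_nonneg.mpr hhi),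
    mul_nonneg (mul_nonneg (sub_nonneg.mpr hlo) (sub_nonneg.mpr hhi)) (sub_nonneg.mpr hhi),
    mul_nonneg (mul_nonneg (sub_nonneg.mpr hlo) (sub_nonneg.mpr hlo)) (sub_nonneg.mpr hhi),
    sq_nonneg (x - (29/50))]

private lemma lA2 : Real.log (16/25) ≤ -(44627/100000) := by
  rw [Real.log_le_iff_le_exp (by norm_num)]
  have hb : Real.exp (44627/100000) ≤ (25/16) :=
    (expUB8 (by norm_num) (by norm_num)).trans (by norm_num)
  have hp := Real.exp_pos ((44627/100000) : ℝ)
  rw [Real.exp_neg]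
  have h1 := inv_mul_cancel₀ hp.ne'
  nlinarith [mul_nonneg (inv_pos.mpr hp).le (sub_nonneg.mpr hb), inv_pos.mpr hp]

private lemma lB2 : -(102167/100000) ≤ Real.log (9/25) := by
  rw [Real.le_log_iff_exp_le (by norm_num)]
  have hb : ((25/9) : ℝ) ≤ Real.exp (102167/100000) :=
    le_trans (by norm_num) (expLB12 (by norm_num))
  have hp := Real.exp_pos ((102167/100000) : ℝ)
  rw [Real.exp_neg]
  have h1 := inv_mul_cancel₀ hp.ne'
  nlinarith [mul_nonneg (inv_pos.mpr hp).le (sub_nonneg.mpr hb), inv_pos.mpr hp]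

private lemma lC2 : ((12367/25000) : ℝ) ≤ Real.log (41/25) := by
  rw [Real.le_log_iff_exp_le (by norm_num)]
  exact (expUB8 (by norm_num) (by norm_num)).trans (by norm_num)

private lemma region2 {x : ℝ} (h0 : 0 < x) (h1 : x < 1)
    (hlo : (61/100) ≤ x) (hhi : x ≤ (33/50)) :
    Real.log x * (2 * x ^ 2 + 2) + Real.log (1 - x) * (-(1 - x) ^ 2)
      + Real.log (1 + x) * (-(1 + x) ^ 2) ≤ -(2443/1000) := by
  have hs : (0:ℝ) < 1 - x := by linarith
  have hw : (0:ℝ) < 1 + x := by linarith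
  have t1 : Real.log x ≤ -(44627/100000) + ((25/16) * x - 1) := by
    have h := Real.log_le_sub_one_of_pos (div_pos h0 (show (0:ℝ) < (16/25) by norm_num))
    rw [Real.log_div h0.ne' (by norm_num)] at h
    have hx : x / (16/25) = (25/16) * x := by ring
    rw [hx] at h
    linarith [lA2]
  have t2 : -(102167/100000) * (1 - x) + ((16/25) - x) ≤ (1 - x) * Real.log (1 - x) := by
    have h := Real.log_le_sub_one_of_pos (div_pos (show (0:ℝ) < (9/25) by norm_num) hs)
    rw [Real.log_div (by norm_num) hs.ne'] at h
    have h3 := mul_le_mul_of_nonneg_left h hs.le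
    rw [mul_sub, mul_sub, mul_div_cancel₀ _ hs.ne'] at h3
    nlinarith [mul_le_mul_of_nonneg_left lB2 hs.le]
  have t3 : ((12367/25000) : ℝ) * (1 + x) + (x - (16/25)) ≤ (1 + x) * Real.log (1 + x) := by
    have h := Real.log_le_sub_one_of_pos (div_pos (show (0:ℝ) < (41/25) by norm_num) hw)
    rw [Real.log_div (by norm_num) hw.ne'] at h
    have h3 := mul_le_mul_of_nonneg_left h hw.le
    rw [mul_sub, mul_sub, mul_div_cancel₀ _ hw.ne'] at h3
    nlinarith [mul_le_mul_of_nonneg_left lC2 hw.le]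
  nlinarith [mul_le_mul_of_nonneg_right t1 (show (0:ℝ) ≤ 2 * x ^ 2 + 2 by positivity),
    mul_le_mul_of_nonneg_left t2 hs.le, mul_le_mul_of_nonneg_left t3 hw.le,
    mul_nonneg (sub_nonneg.mpr hlo) (sub_nonneg.mpr hhi),
    mul_nonneg (mul_nonneg (sub_nonneg.mpr hlo) (sub_nonneg.mpr hhi)) (sub_nonneg.mpr hhi),
    mul_nonneg (mul_nonneg (sub_nonneg.mpr hlo) (sub_nonneg.mpr hlo)) (sub_nonneg.mpr hhi),
    sq_nonneg (x - (16/25))]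

private lemma lA3 : Real.log (18/25) ≤ -(32849/100000) := by
  rw [Real.log_le_iff_le_exp (by norm_num)]
  have hb : Real.exp (32849/100000) ≤ (25/18) :=
    (expUB8 (by norm_num) (by norm_num)).trans (by norm_num)
  have hp := Real.exp_pos ((32849/100000) : ℝ)
  rw [Real.exp_neg]
  have h1 := inv_mul_cancel₀ hp.ne'
  nlinarith [mul_nonneg (inv_pos.mpr hp).le (sub_nonneg.mpr hb), inv_pos.mpr hp]

private lemma lB3 : -(63649/50000) ≤ Real.log (7/25) := by
  rw [Real.le_log_iff_exp_le (by norm_num)]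
  have hb : ((25/7) : ℝ) ≤ Real.exp (63649/50000) :=
    le_trans (by norm_num) (expLB12 (by norm_num))
  have hp := Real.exp_pos ((63649/50000) : ℝ)
  rw [Real.exp_neg]
  have h1 := inv_mul_cancel₀ hp.ne'
  nlinarith [mul_nonneg (inv_pos.mpr hp).le (sub_nonneg.mpr hb), inv_pos.mpr hp]

private lemma lC3 : ((54231/100000) : ℝ) ≤ Real.log (43/25) := by
  rw [Real.le_log_iff_exp_le (by norm_num)]
  exact (expUB8 (by norm_num) (by norm_num)).trans (by norm_num)

private lemma region3 {x : ℝ} (h0 : 0 < x) (h1 : x < 1)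
    (hlo : (33/50) ≤ x) (hhi : x ≤ 1) :
    Real.log x * (2 * x ^ 2 + 2) + Real.log (1 - x) * (-(1 - x) ^ 2)
      + Real.log (1 + x) * (-(1 + x) ^ 2) ≤ -(2443/1000) := by
  have hs : (0:ℝ) < 1 - x := by linarith
  have hw : (0:ℝ) < 1 + x := by linarith
  have t1 : Real.log x ≤ -(32849/100000) + ((25/18) * x - 1) := by
    have h := Real.log_le_sub_one_of_pos (div_pos h0 (show (0:ℝ) < (18/25) by norm_num))
    rw [Real.log_div h0.ne' (by norm_num)] at h
    have hx : x / (18/25) = (25/18) * x := by ring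
    rw [hx] at h
    linarith [lA3]
  have t2 : -(63649/50000) * (1 - x) + ((18/25) - x) ≤ (1 - x) * Real.log (1 - x) := by
    have h := Real.log_le_sub_one_of_pos (div_pos (show (0:ℝ) < (7/25) by norm_num) hs)
    rw [Real.log_div (by norm_num) hs.ne'] at h
    have h3 := mul_le_mul_of_nonneg_left h hs.le
    rw [mul_sub, mul_sub, mul_div_cancel₀ _ hs.ne'] at h3
    nlinarith [mul_le_mul_of_nonneg_left lB3 hs.le]
  have t3 : ((54231/100000) : ℝ) * (1 + x) + (x - (18/25)) ≤ (1 + x) * Real.log (1 + x) := by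
    have h := Real.log_le_sub_one_of_pos (div_pos (show (0:ℝ) < (43/25) by norm_num) hw)
    rw [Real.log_div (by norm_num) hw.ne'] at h
    have h3 := mul_le_mul_of_nonneg_left h hw.le
    rw [mul_sub, mul_sub, mul_div_cancel₀ _ hw.ne'] at h3
    nlinarith [mul_le_mul_of_nonneg_left lC3 hw.le]
  nlinarith [mul_le_mul_of_nonneg_right t1 (show (0:ℝ) ≤ 2 * x ^ 2 + 2 by positivity),
    mul_le_mul_of_nonneg_left t2 hs.le, mul_le_mul_of_nonneg_left t3 hw.le,
    mul_nonneg (sub_nonneg.mpr hlo) (sub_nonneg.mpr hhi),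
    mul_nonneg (mul_nonneg (sub_nonneg.mpr hlo) (sub_nonneg.mpr hhi)) (sub_nonneg.mpr hhi),
    mul_nonneg (mul_nonneg (sub_nonneg.mpr hlo) (sub_nonneg.mpr hlo)) (sub_nonneg.mpr hhi),
    sq_nonneg (x - (18/25))]

theorem psi_lt :
    ∀ x ∈ Set.Ioo (0 : ℝ) 1,
      x ^ (2 * x ^ 2 + 2) * (1 - x) ^ (-(1 - x) ^ 2) * (1 + x) ^ (-(1 + x) ^ 2) < 0.087 := by
  rintro x ⟨hx0, hx1⟩
  have hs : (0:ℝ) < 1 - x := by linarith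
  have hw : (0:ℝ) < 1 + x := by linarith
  rw [Real.rpow_def_of_pos hx0, Real.rpow_def_of_pos hs, Real.rpow_def_of_pos hw,
    ← Real.exp_add, ← Real.exp_add]
  have key : Real.log x * (2 * x ^ 2 + 2) + Real.log (1 - x) * (-(1 - x) ^ 2)
      + Real.log (1 + x) * (-(1 + x) ^ 2) ≤ -(2443/1000) := by
    rcases le_or_gt x (11/20) with h | h
    · exact region0 hx0 hx1 hx0.le h
    rcases le_or_gt x (61/100) with h2 | h2
    · exact region1 hx0 hx1 h.le h2
    rcases le_or_gt x (33/50) with h3 | h3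
    · exact region2 hx0 hx1 h2.le h3
    · exact region3 hx0 hx1 h3.le hx1.le
  have hexp : Real.exp (-(2443/1000)) < 0.087 := by
    have hb : (1000/87 : ℝ) < Real.exp (2443/1000) :=
      lt_of_lt_of_le (by norm_num) (expLB12 (by norm_num))
    have hp := Real.exp_pos ((2443/1000) : ℝ)
    rw [Real.exp_neg]
    have h1 := inv_mul_cancel₀ hp.ne'
    have h2 : (0:ℝ) < (Real.exp (2443/1000))⁻¹ := inv_pos.mpr hp
    nlinarith [mul_pos h2 (sub_pos.mpr hb)]
  calc Real.exp (Real.log x * (2 * x ^ 2 + 2) + Real.log (1 - x) * (-(1 - x) ^ 2)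
        + Real.log (1 + x) * (-(1 + x) ^ 2))
      ≤ Real.exp (-(2443/1000)) := Real.exp_le_exp.mpr key
    _ < 0.087 := hexp
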